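/- Let T : M × M × M → M be a symmetric F-trilinear map satisfying q(x + t·w) = q(x) + 4t·{T(x,x,x),w} + 6t²·{T(x,x,w),w} + 4t³·{T(x,w,w),w} + t⁴·q(w) for all x, w ∈ M and all t ∈ F (so T is the trilinear operator determined by the full linearization of q via the symplectic form). Then for x = (α,β,A,B) ∈ M the following are equivalent: (a) αA − B# = 0, βB − A# = 0, and (αβ − (A,B))C + ABC + CBA = 0 for all C ∈ J; (b) 3·T(x,x,y) + {x,y}·x = 0 for all y ∈ M. -/

import Mathlib

open Matrix

namespace Freudenthal

variable (F : Type*) [Field F]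

/-- The cubic Jordan algebra `J = M₃(F)`. -/
abbrev Mat := Matrix (Fin 3) (Fin 3) F

/-- The trace bilinear form `(A, B) = tr(A·B)` on `J`. -/
def tb (A B : Mat F) : F := (A * B).trace

/-- The Freudenthal module `M = F ⊕ F ⊕ J ⊕ J`, elements `(α, β, A, B)`. -/
abbrev FM := F × F × Mat F × Mat F

/-- The quartic norm `q(x) = 8(A#,B#) − 8α·det A − 8β·det B − 2((A,B) − αβ)²`. -/
def qf (x : FM F) : F :=
  8 * tb F x.2.2.1.adjugate x.2.2.2.adjugate - 8 * x.1 * x.2.2.1.det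
    - 8 * x.2.1 * x.2.2.2.det - 2 * (tb F x.2.2.1 x.2.2.2 - x.1 * x.2.1) ^ 2

/-- The symplectic form `{x, y} = αδ − βγ + (A,D) − (B,C)`. -/
def symp (x y : FM F) : F :=
  x.1 * y.2.1 - x.2.1 * y.1 + tb F x.2.2.1 y.2.2.2 - tb F x.2.2.2 y.2.2.1

/-- The rank `≤ 1` condition: `αA − B# = 0`, `βB − A# = 0`, and
`(αβ − (A,B))C + ABC + CBA = 0` for all `C ∈ J`. -/
def RankLeOne (x : FM F) : Prop :=
  x.1 • x.2.2.1 - x.2.2.2.adjugate = 0 ∧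
  x.2.1 • x.2.2.2 - x.2.2.1.adjugate = 0 ∧
  ∀ C : Mat F,
    (x.1 * x.2.1 - tb F x.2.2.1 x.2.2.2) • C
      + x.2.2.1 * x.2.2.2 * C + C * x.2.2.2 * x.2.2.1 = 0

end Freudenthal

/-!
The hypothesis on `q` determines `T`. Comparing the coefficients of `t` in it and in an explicit
expansion of `q(x + t w)` (they are separated by evaluating at `t = 0, ±1, 2`, which needs
`char F ≠ 2, 3`) and using that `{·,·}` is nondegenerate gives `T(z,z,z)` as an explicit cubic
`tripleCube z`; polarizing once more gives `3 T(x,x,y)` explicitly. By the linearized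
Cayley–Hamilton identity, the four components of `3 T(x,x,y) + {x,y} x` are combinations of
`(A,B) − 3αβ`, `αA − B#`, `A# − βB` and `((A,B) + αβ) C − 2 (ABC + CBA)`. The third rank condition,
tested at `C = 1`, makes `AB` central, hence `AB = BA = αβ·1` and `(A,B) = 3αβ`, and then every
component vanishes; conversely, testing against coordinate directions `y` recovers the conditions.
-/

section Polarization

variable {F V : Type*} [Field F] [AddCommGroup V] [Module F V]

lemma linear_coeff_eq_of_cubic (h2 : (2 : F) ≠ 0) (h3 : (3 : F) ≠ 0)
    {a₀ a₁ a₂ a₃ b₀ b₁ b₂ b₃ : V}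
    (h : ∀ s : F, a₀ + s • a₁ + s ^ 2 • a₂ + s ^ 3 • a₃ = b₀ + s • b₁ + s ^ 2 • b₂ + s ^ 3 • b₃) :
    a₁ = b₁ := by
  have h6 : (2 : F) • (3 : F) • (a₁ - b₁) = 0 := by
    linear_combination (norm := module) (6 : F) • h 1 - (2 : F) • h (-1) - h 2 - (3 : F) • h 0
  exact sub_eq_zero.mp <| (smul_eq_zero.mp <| (smul_eq_zero.mp h6).resolve_left h2).resolve_left h3

lemma trilinear_diag_add_smul (T : V → V → V → V)
    (hlin : ∀ y z : V, IsLinearMap F (fun a => T a y z))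
    (hsym1 : ∀ x y z : V, T x y z = T y x z) (hsym2 : ∀ x y z : V, T x y z = T x z y)
    (x y : V) (s : F) :
    T (x + s • y) (x + s • y) (x + s • y)
      = T x x x + s • (3 : F) • T x x y + s ^ 2 • (3 : F) • T y y x + s ^ 3 • T y y y := by
  have e1 : ∀ u v : V, T (x + s • y) u v = T x u v + s • T y u v := fun u v => by
    rw [(hlin u v).map_add, (hlin u v).map_smul]
  have e2 : ∀ u v : V, T u (x + s • y) v = T u x v + s • T u y v := fun u v => by
    rw [hsym1, e1, hsym1 x, hsym1 y]
  have e3 : ∀ u v : V, T u v (x + s • y) = T u v x + s • T u v y := fun u v => by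
    rw [hsym2, e2, hsym2 u x, hsym2 u y]
  have hxxy : T y x x = T x x y ∧ T x y x = T x x y := by
    refine ⟨by rw [hsym1, hsym2], hsym2 x y x⟩
  have hyyx : T y x y = T y y x ∧ T x y y = T y y x := by
    refine ⟨hsym2 y x y, by rw [hsym1, hsym2]⟩
  rw [e1, e2, e2, e3, e3, e3, e3, hxxy.1, hxxy.2, hyyx.1, hyyx.2]
  module

end Polarization

namespace Freudenthal

variable {F : Type*} [Field F]

lemma tb_comm (A B : Mat F) : tb F A B = tb F B A := trace_mul_comm A B

lemma tb_add_left (A B C : Mat F) : tb F (A + B) C = tb F A C + tb F B C := by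
  simp [tb, add_mul]

lemma tb_add_right (A B C : Mat F) : tb F A (B + C) = tb F A B + tb F A C := by
  simp [tb, mul_add]

lemma tb_sub_left (A B C : Mat F) : tb F (A - B) C = tb F A C - tb F B C := by
  simp [tb, sub_mul]

lemma tb_smul_left (t : F) (A B : Mat F) : tb F (t • A) B = t * tb F A B := by
  simp [tb]

lemma tb_smul_right (t : F) (A B : Mat F) : tb F A (t • B) = t * tb F A B := by
  simp [tb]

def cross (A B : Mat F) : Mat F := (A + B).adjugate - A.adjugate - B.adjugate

lemma cross_eq (A B : Mat F) :
    cross A B = A * B + B * A - A.trace • B - B.trace • A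
      + (A.trace * B.trace - (A * B).trace) • (1 : Mat F) := by
  ext i j
  fin_cases i <;> fin_cases j <;>
    simp [cross, adjugate_fin_three, trace_fin_three, mul_apply, Fin.sum_univ_three,
      one_apply] <;> ring

lemma cross_comm (A B : Mat F) : cross A B = cross B A := by
  rw [cross, cross, add_comm, sub_right_comm]

lemma cross_self (A : Mat F) : cross A A = (2 : F) • A.adjugate := by
  rw [cross, ← two_smul F A, adjugate_smul]
  simp only [Fintype.card_fin]
  module

lemma cross_add_left (A B C : Mat F) : cross (A + B) C = cross A C + cross B C := by
  simp only [cross_eq, add_mul, mul_add, trace_add]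
  module

lemma cross_smul_left (t : F) (A C : Mat F) : cross (t • A) C = t • cross A C := by
  simp only [cross_eq, smul_mul_assoc, mul_smul_comm, trace_smul, smul_eq_mul]
  module

lemma cross_add_right (A B C : Mat F) : cross A (B + C) = cross A B + cross A C := by
  rw [cross_comm, cross_add_left, cross_comm B, cross_comm C]

lemma cross_smul_right (t : F) (A C : Mat F) : cross A (t • C) = t • cross A C := by
  rw [cross_comm, cross_smul_left, cross_comm]

lemma cross_sub_left (A B C : Mat F) : cross (A - B) C = cross A C - cross B C := by
  simp only [cross_eq, sub_mul, mul_sub, trace_sub]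
  module

lemma cross_zero_left (C : Mat F) : cross 0 C = 0 := by
  simpa using cross_smul_left 0 0 C

lemma adjugate_add_smul (t : F) (A C : Mat F) :
    (A + t • C).adjugate = A.adjugate + t • cross A C + t ^ 2 • C.adjugate := by
  have h := cross_smul_right t A C
  rw [cross, adjugate_smul, Fintype.card_fin] at h
  rw [← h]
  abel

lemma det_add_smul (t : F) (A C : Mat F) :
    (A + t • C).det = A.det + t * tb F A.adjugate C + t ^ 2 * tb F C.adjugate A
      + t ^ 3 * C.det := by
  simp [tb, det_fin_three, adjugate_fin_three, trace_fin_three, vecMul, dotProduct,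
    Fin.sum_univ_three]
  ring

lemma tb_cross_assoc (U V W : Mat F) : tb F (cross U V) W = tb F U (cross V W) := by
  simp only [tb, cross_eq, add_mul, mul_add, sub_mul, mul_sub, smul_mul_assoc, mul_smul_comm,
    trace_add, trace_sub, trace_smul, smul_eq_mul, one_mul, mul_one]
  rw [mul_assoc V U W, trace_mul_comm V (U * W), mul_assoc U W V, mul_assoc U V W]
  ring

lemma tb_self_cross (U W : Mat F) : tb F U (cross U W) = 2 * tb F U.adjugate W := by
  rw [← tb_cross_assoc, cross_self, tb_smul_left]

lemma tb_cross_left_comm (U V W : Mat F) : tb F U (cross V W) = tb F V (cross U W) := by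
  rw [← tb_cross_assoc, cross_comm, tb_cross_assoc]

set_option maxHeartbeats 400000 in
/-- The linearized Cayley–Hamilton identity. -/
lemma cross_cross_eq (A B C : Mat F) :
    cross (cross A C) B = tb F B C • A + tb F A B • C - A * B * C - C * B * A := by
  rw [eq_sub_iff_add_eq, eq_sub_iff_add_eq, cross_eq, cross_eq]
  ext i j
  fin_cases i <;> fin_cases j <;>
    simp [tb, trace_fin_three, mul_apply, Fin.sum_univ_three, one_apply] <;> ring

lemma eq_of_forall_symp_eq {u v : FM F} (h : ∀ w : FM F, symp F u w = symp F v w) : u = v := by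
  obtain ⟨a, b, A, B⟩ := u
  obtain ⟨a', b', A', B'⟩ := v
  have ha : a = a' := by simpa [symp, tb] using h (0, 1, 0, 0)
  have hb : b = b' := by simpa [symp, tb] using h (1, 0, 0, 0)
  have hA : A = A' := ext_iff_trace_mul_right.mpr fun D => by
    simpa [symp, tb] using h (0, 0, 0, D)
  have hB : B = B' := ext_iff_trace_mul_right.mpr fun C => by
    simpa [symp, tb] using h (0, 0, C, 0)
  rw [ha, hb, hA, hB]

/-- Read off from the linear term of `q(x + t w)`, see `qf_add_smul`. -/
def tripleCube : FM F → FM F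
  | (a, b, A, B) =>
    (a * (tb F A B - a * b) - 2 * B.det,
     2 * A.det - b * (tb F A B - a * b),
     (2 : F) • cross A.adjugate B - (2 * b) • B.adjugate - (tb F A B - a * b) • A,
     (2 * a) • A.adjugate - (2 : F) • cross A B.adjugate + (tb F A B - a * b) • B)

/-- `3 T(x,x,y)`: the polarization of `tripleCube`, see `tripleCube_add_smul`. -/
def tripleCubeDeriv : FM F → FM F → FM F
  | (a, b, A, B), (g, d, C, D) =>
    (g * (tb F A B - a * b) + a * (tb F A D + tb F C B - a * d - b * g)
        - 2 * tb F B.adjugate D,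
     2 * tb F A.adjugate C - d * (tb F A B - a * b)
        - b * (tb F A D + tb F C B - a * d - b * g),
     (2 : F) • cross (cross A C) B + (2 : F) • cross A.adjugate D - (2 * d) • B.adjugate
        - (2 * b) • cross B D - (tb F A D + tb F C B - a * d - b * g) • A
        - (tb F A B - a * b) • C,
     (2 * g) • A.adjugate + (2 * a) • cross A C - (2 : F) • cross C B.adjugate
        - (2 : F) • cross A (cross B D) + (tb F A D + tb F C B - a * d - b * g) • B
        + (tb F A B - a * b) • D)

lemma qf_add_smul (x w : FM F) (t : F) :
    qf F (x + t • w) = qf F x + 4 * t * symp F (tripleCube x) w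
      + 2 * t ^ 2 * symp F (tripleCubeDeriv x w) w + 4 * t ^ 3 * symp F (tripleCube w) x
      + t ^ 4 * qf F w := by
  obtain ⟨a, b, A, B⟩ := x
  obtain ⟨g, d, C, D⟩ := w
  simp only [qf, symp, tripleCube, tripleCubeDeriv, Prod.smul_mk, Prod.mk_add_mk, smul_eq_mul,
    adjugate_add_smul, det_add_smul, tb_add_left, tb_add_right, tb_sub_left, tb_smul_left,
    tb_smul_right]
  simp only [tb_cross_assoc, cross_self, tb_smul_right]
  simp only [tb_cross_left_comm, tb_self_cross, tb_comm, cross_comm]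
  ring

lemma tripleCube_add_smul (x y : FM F) (s : F) :
    tripleCube (x + s • y) = tripleCube x + s • tripleCubeDeriv x y
      + s ^ 2 • tripleCubeDeriv y x + s ^ 3 • tripleCube y := by
  obtain ⟨a, b, A, B⟩ := x
  obtain ⟨g, d, C, D⟩ := y
  simp only [tripleCube, tripleCubeDeriv, Prod.smul_mk, Prod.mk_add_mk, smul_eq_mul,
    adjugate_add_smul, det_add_smul, cross_add_left, cross_add_right, cross_smul_left,
    cross_smul_right, tb_add_left, tb_add_right, tb_smul_left, tb_smul_right]
  refine Prod.ext ?_ (Prod.ext ?_ (Prod.ext ?_ ?_))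
  · simp only [tb_comm]; ring
  · simp only [tb_comm]; ring
  · simp only [tb_comm, cross_comm]; module
  · simp only [tb_comm, cross_comm]; module

lemma tripleCubeDeriv_add_symp_smul (a b g d : F) (A B C D : Mat F) :
    tripleCubeDeriv (a, b, A, B) (g, d, C, D) + symp F (a, b, A, B) (g, d, C, D) • (a, b, A, B) =
      (g * (tb F A B - 3 * (a * b)) + 2 * tb F (a • A - B.adjugate) D,
       2 * tb F (A.adjugate - b • B) C - d * (tb F A B - 3 * (a * b)),
       (tb F A B + a * b) • C - (2 : F) • (A * B * C + C * B * A)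
         + (2 : F) • cross (A.adjugate - b • B) D + (2 * d) • (a • A - B.adjugate),
       (2 : F) • (B * A * D + D * A * B) - (tb F A B + a * b) • D
         + (2 : F) • cross (a • A - B.adjugate) C + (2 * g) • (A.adjugate - b • B)) := by
  have hBD : cross A (cross B D) = tb F A D • B + tb F B A • D - B * A * D - D * A * B := by
    rw [cross_comm, cross_cross_eq]
  simp only [tripleCubeDeriv, symp, Prod.smul_mk, Prod.mk_add_mk, smul_eq_mul]
  refine Prod.ext ?_ (Prod.ext ?_ (Prod.ext ?_ ?_))
  · simp only [tb_sub_left, tb_smul_left, tb_comm C]; ring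
  · simp only [tb_sub_left, tb_smul_left, tb_comm C]; ring
  · simp only [cross_cross_eq, cross_sub_left, cross_smul_left, tb_comm C]; module
  · simp only [hBD, cross_sub_left, cross_smul_left, tb_comm C, cross_comm C B.adjugate,
      tb_comm B A]
    module

lemma mul_eq_smul_one_of_forall (h3 : (3 : F) ≠ 0) {a b : F} {A B : Mat F}
    (h : ∀ C : Mat F, (a * b - tb F A B) • C + A * B * C + C * B * A = 0) :
    A * B = (a * b) • 1 ∧ B * A = (a * b) • 1 := by
  have hone := h 1
  rw [mul_one, one_mul] at hone
  have hBA : B * A = (tb F A B - a * b) • 1 - A * B := by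
    linear_combination (norm := module) hone
  have htrAB : (A * B).trace = tb F A B := rfl
  have htr : tb F A B = 3 * (a * b) := by
    have := congrArg trace hone
    simp only [trace_add, trace_smul, trace_one, trace_zero, Fintype.card_fin, Nat.cast_ofNat,
      smul_eq_mul, trace_mul_comm B A, htrAB] at this
    linear_combination -this
  -- after substituting `hBA`, the hypothesis says that `A * B` commutes with every `C`
  obtain ⟨c, hc⟩ := mem_range_scalar_of_commute_single (M := A * B) fun i j _ => by
    have := h (single i j 1)
    rw [mul_assoc _ B A, hBA, mul_sub, mul_smul_comm, mul_one] at this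
    exact (sub_eq_zero.mp (by linear_combination (norm := module) this)).symm
  have hAB : A * B = c • 1 := by rw [← hc, smul_one_eq_diagonal]; rfl
  have hc' : c = a * b := by
    have := congrArg trace hAB
    simp only [trace_smul, trace_one, Fintype.card_fin, Nat.cast_ofNat, smul_eq_mul, htrAB,
      htr] at this
    exact mul_left_cancel₀ h3 (by linear_combination -this)
  subst hc'
  refine ⟨hAB, ?_⟩
  rw [hBA, htr, hAB]
  module

lemma rankLeOne_iff_tripleCubeDeriv (h2 : (2 : F) ≠ 0) (h3 : (3 : F) ≠ 0) (x : FM F) :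
    RankLeOne F x ↔ ∀ y : FM F, tripleCubeDeriv x y + symp F x y • x = 0 := by
  obtain ⟨a, b, A, B⟩ := x
  constructor
  · rintro ⟨hBadj, hAadj, hC⟩
    obtain ⟨hAB, hBA⟩ := mul_eq_smul_one_of_forall h3 hC
    have htr : tb F A B = 3 * (a * b) := by
      simp only [tb, hAB, trace_smul, trace_one, Fintype.card_fin, Nat.cast_ofNat, smul_eq_mul]
      ring
    have hAadj' : A.adjugate - b • B = 0 := by rw [← neg_sub, hAadj, neg_zero]
    rintro ⟨g, d, C, D⟩
    rw [tripleCubeDeriv_add_symp_smul, htr, hBadj, hAadj', mul_assoc C, mul_assoc D, hAB, hBA]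
    simp only [tb, zero_mul, trace_zero, cross_zero_left, smul_mul_assoc, mul_smul_comm, one_mul,
      mul_one]
    refine Prod.ext ?_ (Prod.ext ?_ (Prod.ext ?_ ?_)) <;> simp only [Prod.fst_zero, Prod.snd_zero]
    · ring
    · ring
    · module
    · module
  · intro h
    have hy := fun g d C D =>
      (tripleCubeDeriv_add_symp_smul a b g d A B C D).symm.trans (h (g, d, C, D))
    simp only [Prod.ext_iff, Prod.fst_zero, Prod.snd_zero] at hy
    have htr : tb F A B = 3 * (a * b) := by
      simpa [tb, sub_eq_zero] using (hy 1 0 0 0).1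
    have hBadj : a • A - B.adjugate = 0 := ext_iff_trace_mul_right.mpr fun D => by
      simpa [tb, h2] using (hy 0 0 0 D).1
    have hAadj : A.adjugate - b • B = 0 := ext_iff_trace_mul_right.mpr fun C => by
      simpa [tb, h2] using (hy 0 0 C 0).2.1
    refine ⟨hBadj, by rw [← neg_sub, hAadj, neg_zero], fun C => ?_⟩
    have hC := (hy 0 0 C 0).2.2.1
    rw [hAadj, cross_zero_left] at hC
    have : (-2 : F) • ((a * b - tb F A B) • C + A * B * C + C * B * A) = 0 := by
      rw [htr] at hC ⊢
      linear_combination (norm := module) hC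
    exact (smul_eq_zero.mp this).resolve_left (neg_ne_zero.mpr h2)

lemma trilinear_diag_eq_tripleCube (h2 : (2 : F) ≠ 0) (h3 : (3 : F) ≠ 0)
    (T : FM F → FM F → FM F → FM F)
    (hq : ∀ (x w : FM F) (t : F),
      qf F (x + t • w) = qf F x + 4 * t * symp F (T x x x) w
        + 6 * t ^ 2 * symp F (T x x w) w + 4 * t ^ 3 * symp F (T x w w) w
        + t ^ 4 * qf F w)
    (z : FM F) :
    T z z z = tripleCube z := by
  refine eq_of_forall_symp_eq fun w => ?_
  have h4 : 4 * symp F (T z z z) w = 4 * symp F (tripleCube z) w := by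
    refine linear_coeff_eq_of_cubic h2 h3 (a₀ := qf F z) (b₀ := qf F z)
      (a₂ := 6 * symp F (T z z w) w) (b₂ := 2 * symp F (tripleCubeDeriv z w) w)
      (a₃ := 4 * symp F (T z w w) w) (b₃ := 4 * symp F (tripleCube w) z) fun t => ?_
    have := (hq z w t).symm.trans (qf_add_smul z w t)
    simp only [smul_eq_mul]
    linear_combination this
  have h4ne : (4 : F) ≠ 0 := by
    rw [show (4 : F) = 2 * 2 by norm_num]
    exact mul_ne_zero h2 h2
  exact mul_left_cancel₀ h4ne h4

lemma three_smul_trilinear_eq_tripleCubeDeriv (h2 : (2 : F) ≠ 0) (h3 : (3 : F) ≠ 0)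
    (T : FM F → FM F → FM F → FM F)
    (hlin : ∀ y z : FM F, IsLinearMap F (fun a => T a y z))
    (hsym1 : ∀ x y z : FM F, T x y z = T y x z) (hsym2 : ∀ x y z : FM F, T x y z = T x z y)
    (hcube : ∀ z : FM F, T z z z = tripleCube z) (x y : FM F) :
    (3 : F) • T x x y = tripleCubeDeriv x y :=
  linear_coeff_eq_of_cubic h2 h3 (a₀ := T x x x) (a₂ := (3 : F) • T y y x) (a₃ := T y y y)
    fun s => by
      rw [← trilinear_diag_add_smul T hlin hsym1 hsym2, hcube]
      exact tripleCube_add_smul x y s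

end Freudenthal

open Freudenthal

/-- **Characterization of rank `≤ 1` elements via the trilinear operator.**
Let `T` be the symmetric trilinear map on `M = F ⊕ F ⊕ M₃(F) ⊕ M₃(F)` determined by the
full linearization of the quartic norm `q` via the symplectic form. Then for
`x = (α,β,A,B)` the conditions `αA − B# = 0`, `βB − A# = 0`,
`(αβ − (A,B))C + ABC + CBA = 0` (for all `C`) hold if and only if
`3·T(x,x,y) + {x,y}·x = 0` for all `y ∈ M`. -/
theorem rank_le_one_iff_trilinear (F : Type*) [Field F]
    (h2 : (2 : F) ≠ 0) (h3 : (3 : F) ≠ 0)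
    (T : FM F → FM F → FM F → FM F)
    (hlin : ∀ y z : FM F, IsLinearMap F (fun a => T a y z))
    (hsym1 : ∀ x y z : FM F, T x y z = T y x z)
    (hsym2 : ∀ x y z : FM F, T x y z = T x z y)
    (hq : ∀ (x w : FM F) (t : F),
      qf F (x + t • w) = qf F x + 4 * t * symp F (T x x x) w
        + 6 * t ^ 2 * symp F (T x x w) w + 4 * t ^ 3 * symp F (T x w w) w
        + t ^ 4 * qf F w)
    (x : FM F) :
    RankLeOne F x ↔ ∀ y : FM F, (3 : F) • T x x y + symp F x y • x = 0 := by
  have hcube := trilinear_diag_eq_tripleCube h2 h3 T hq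
  simp only [rankLeOne_iff_tripleCubeDeriv h2 h3,
    three_smul_trilinear_eq_tripleCubeDeriv h2 h3 T hlin hsym1 hsym2 hcube]
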